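/- arXiv:1904.11583 — 5 statements merged into one kernel-verified Lean document; each statement's English description precedes it below -/
import Mathlib

section
/- Factorization of the Poisson-representation diffusion matrix (equation (13)): Consider a binary reaction network, i.e. ‖y_k‖₁ ≤ 2 and ‖y'_k‖₁ ≤ 2 for all k. Then for every u ∈ ℝ^d and all i,j ∈ {1,…,d}, B_{ij}(u) = (1 + δ_{ij}) · ( Σ_{k: y'_k = e_i+e_j} κ_k u^{y_k} − Σ_{k: y_k = e_i+e_j} κ_k u^{y_k} ), where the first sum is over reactions with product complex e_i + e_j and the second over reactions with source complex e_i + e_j. -/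
open Finset

/-- Monomial `u^v = ∏ i, u i ^ v i` (with the convention `0^0 = 1`). -/
noncomputable def monPow {d : ℕ} (u : Fin d → ℝ) (v : Fin d → ℕ) : ℝ :=
  ∏ i, u i ^ v i

/-- The reaction vector `ζ = y' - y`, viewed as a real vector. -/
def zetaVec {d : ℕ} (y y' : Fin d → ℕ) : Fin d → ℝ :=
  fun i => (y' i : ℝ) - (y i : ℝ)

/-- Stochastic mass action intensity `λ_k(x) = κ_k ∏_i x_i!/(x_i - y_{ki})!`,
taken to be `0` when `x` is not componentwise at least `y_k`. -/
noncomputable def intensity {d : ℕ} (κk : ℝ) (yk : Fin d → ℕ) (x : Fin d → ℕ) : ℝ :=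
  κk * ∏ i, ((x i).descFactorial (yk i) : ℝ)

/-- Right-hand side of the deterministic mass-action ODE: `Σ_k κ_k c^{y_k} ζ_k`. -/
noncomputable def massActionRHS {d K : ℕ} (κ : Fin K → ℝ) (y y' : Fin K → Fin d → ℕ)
    (c : Fin d → ℝ) : Fin d → ℝ :=
  ∑ k, (κ k * monPow c (y k)) • zetaVec (y k) (y' k)

/-- `c` is differentiable on `[0,∞)` and solves the mass-action ODE there. -/
def solvesMassAction {d K : ℕ} (κ : Fin K → ℝ) (y y' : Fin K → Fin d → ℕ)
    (c : ℝ → Fin d → ℝ) : Prop :=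
  ∀ t ≥ (0:ℝ), HasDerivWithinAt c (massActionRHS κ y y' (c t)) (Set.Ici 0) t

/-- The dynamical and restricted (DR) complex balance condition: for every complex `z`
with `‖z‖₁ ≥ 2` and every `t ≥ 0`,
`Σ_{k : y_k = z} κ_k c(t)^z = Σ_{k : y'_k = z} κ_k c(t)^{y_k}`. -/
def DRcondition {d K : ℕ} (κ : Fin K → ℝ) (y y' : Fin K → Fin d → ℕ)
    (c : ℝ → Fin d → ℝ) : Prop :=
  ∀ z : Fin d → ℕ, 2 ≤ ∑ i, z i → ∀ t ≥ (0:ℝ),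
    ∑ k ∈ univ.filter (fun k => y k = z), κ k * monPow (c t) z
      = ∑ k ∈ univ.filter (fun k => y' k = z), κ k * monPow (c t) (y k)

/-- `P` solves the chemical master equation on `[0,∞)`:
`∂ₜ P(x,t) = Σ_k λ_k(x-ζ_k) P(x-ζ_k,t) 1{x-ζ_k ≥ 0} - Σ_k λ_k(x) P(x,t)`. -/
def solvesCME {d K : ℕ} (κ : Fin K → ℝ) (y y' : Fin K → Fin d → ℕ)
    (P : (Fin d → ℕ) → ℝ → ℝ) : Prop :=
  ∀ x : Fin d → ℕ, ∀ t ≥ (0:ℝ),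
    HasDerivWithinAt (P x)
      ((∑ k, if ∀ i, y' k i ≤ x i + y k i then
          intensity (κ k) (y k) (fun i => x i + y k i - y' k i)
            * P (fun i => x i + y k i - y' k i) t
        else 0)
       - ∑ k, intensity (κ k) (y k) x * P x t)
      (Set.Ici 0) t

/-- The product-Poisson probability mass function `∏_i e^{-c_i} c_i^{x_i}/x_i!`. -/
noncomputable def productPoisson {d : ℕ} (c : Fin d → ℝ) (x : Fin d → ℕ) : ℝ :=
  ∏ i, Real.exp (-(c i)) * (c i) ^ (x i) / (x i).factorial

/-- The diffusion matrix of the Poisson representation: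
`B_{ij}(u) = Σ_k κ_k u^{y_k} (y'_{ki} y'_{kj} - y_{ki} y_{kj} - δ_{ij} ζ_{ki})`. -/
noncomputable def Bmat {d K : ℕ} (κ : Fin K → ℝ) (y y' : Fin K → Fin d → ℕ)
    (u : Fin d → ℝ) (i j : Fin d) : ℝ :=
  ∑ k, κ k * monPow u (y k) *
    ((y' k i : ℝ) * (y' k j : ℝ) - (y k i : ℝ) * (y k j : ℝ)
      - (if i = j then (1:ℝ) else 0) * zetaVec (y k) (y' k) i)

/-- The complex `e_i + e_j`. -/
def eij {d : ℕ} (i j : Fin d) : Fin d → ℕ :=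
  fun l => (if l = i then 1 else 0) + (if l = j then 1 else 0)

lemma key_factor {d : ℕ} (v : Fin d → ℕ) (i j : Fin d) (h : ∑ l, v l ≤ 2) :
    (v i : ℝ) * v j - (if i = j then (1:ℝ) else 0) * v i
      = (1 + if i = j then (1:ℝ) else 0) * (if v = eij i j then 1 else 0) := by
  have pair_le : ∀ a b : Fin d, a ≠ b → v a + v b ≤ ∑ l, v l := by
    intro a b hab
    calc v a + v b = ∑ l ∈ ({a, b} : Finset (Fin d)), v l := (Finset.sum_pair hab).symm
      _ ≤ ∑ l, v l := Finset.sum_le_sum_of_subset (Finset.subset_univ _)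
  by_cases hij : i = j
  · subst hij
    simp only [if_pos rfl]
    by_cases hv : v = eij i i
    · rw [hv]
      simp [eij]
      norm_num
    · rw [if_neg hv]
      have hvi : v i ≤ 1 := by
        by_contra h2
        push_neg at h2
        apply hv
        funext l
        by_cases hl : l = i
        · subst hl
          have hle : v l ≤ ∑ m, v m :=
            Finset.single_le_sum (fun _ _ => Nat.zero_le _) (Finset.mem_univ l)
          simp [eij]
          omega
        · have := pair_le l i hl
          simp only [eij, if_neg hl]
          omega
      interval_cases hn : v i <;> norm_num
  · simp only [if_neg hij]
    by_cases hv : v = eij i j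
    · rw [hv, if_pos rfl]
      simp [eij, hij, Ne.symm hij]
    · rw [if_neg hv]
      have : v i = 0 ∨ v j = 0 := by
        by_contra hc
        push_neg at hc
        apply hv
        have hij2 := pair_le i j hij
        funext l
        by_cases hli : l = i
        · subst hli
          simp [eij, hij]
          omega
        · by_cases hlj : l = j
          · subst hlj
            simp [eij, Ne.symm hij]
            omega
          · simp only [eij, if_neg hli, if_neg hlj]
            have hs : ∑ m ∈ ({i, j} : Finset (Fin d)), v m = v i + v j :=
              Finset.sum_pair hij
            have hsd : ∑ m ∈ (Finset.univ \ ({i, j} : Finset (Fin d))), v m +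
                ∑ m ∈ ({i, j} : Finset (Fin d)), v m = ∑ m, v m :=
              Finset.sum_sdiff (Finset.subset_univ _)
            have hzero : ∑ m ∈ (Finset.univ \ ({i, j} : Finset (Fin d))), v m = 0 := by
              omega
            have hl0 : v l = 0 := by
              have hmem : l ∈ Finset.univ \ ({i, j} : Finset (Fin d)) := by
                simp [hli, hlj]
              exact (Finset.sum_eq_zero_iff.mp hzero) l hmem
            omega
      rcases this with h0 | h0 <;> simp [h0]

/-- Factorization of the Poisson-representation diffusion matrix (equation (13)): for a
binary reaction network,
`B_{ij}(u) = (1 + δ_{ij}) (Σ_{k: y'_k = e_i+e_j} κ_k u^{y_k} - Σ_{k: y_k = e_i+e_j} κ_k u^{y_k})`. -/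
theorem Bmat_factorization
    {d K : ℕ} (κ : Fin K → ℝ) (y y' : Fin K → Fin d → ℕ)
    (hκ : ∀ k, 0 ≤ κ k) (hyy' : ∀ k, y' k ≠ y k)
    (hbin : ∀ k, (∑ i, y k i) ≤ 2 ∧ (∑ i, y' k i) ≤ 2)
    (u : Fin d → ℝ) (i j : Fin d) :
    Bmat κ y y' u i j =
      (1 + if i = j then (1:ℝ) else 0) *
        ((∑ k ∈ univ.filter (fun k => y' k = eij i j), κ k * monPow u (y k))
          - ∑ k ∈ univ.filter (fun k => y k = eij i j), κ k * monPow u (y k)) := by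
  unfold Bmat
  rw [Finset.sum_filter, Finset.sum_filter, ← Finset.sum_sub_distrib, Finset.mul_sum]
  apply Finset.sum_congr rfl
  intro k _
  have h1 := key_factor (y' k) i j (hbin k).2
  have h2 := key_factor (y k) i j (hbin k).1
  simp only [zetaVec]
  set c := κ k * monPow u (y k) with hc
  have e1 : (if y' k = eij i j then c else 0) = c * (if y' k = eij i j then 1 else 0) := by
    split_ifs <;> ring
  have e2 : (if y k = eij i j then c else 0) = c * (if y k = eij i j then 1 else 0) := by
    split_ifs <;> ring
  rw [e1, e2]
  linear_combination c * h1 - c * h2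
end

section
/- Example 2.1 (existence of a nonconstant DR solution for the network 2X ⇌ 2Y, ∅ ⇌ X, ∅ ⇌ Y): Let κ₁,…,κ₆ > 0 and x₀, y₀ > 0 satisfy κ₄ = κ₆ and √(κ₁/κ₂) = κ₅/κ₃ = y₀/x₀. Define x(t) := (x₀ − κ₃/κ₄)e^{−κ₄ t} + κ₃/κ₄ and y(t) := (y₀ − κ₅/κ₆)e^{−κ₆ t} + κ₅/κ₆. Then x and y satisfy the nonlinear mass-action system x'(t) = −2κ₁x(t)² + 2κ₂y(t)² + κ₃ − κ₄x(t), y'(t) = 2κ₁x(t)² − 2κ₂y(t)² + κ₅ − κ₆y(t) with x(0) = x₀, y(0) = y₀, and the DR condition κ₁ x(t)² = κ₂ y(t)² holds for all t ≥ 0. -/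
/-!
Under the hypotheses, with `c = κ₅ / κ₃` one has `κ₁ = κ₂ c²`, `y₀ = c x₀` and `κ₅ = c κ₃`, so the
explicit solution of the linear inflow/outflow equation `y' = κ₅ - κ₄ y` is `c` times that of
`x' = κ₃ - κ₄ x`. Hence `y = c x` for all time, which gives `κ₁ x² = κ₂ y²`: the reaction terms
`±2(κ₁ x² - κ₂ y²)` vanish identically and the nonlinear system reduces to the two linear ones.
-/

open Real

/-- The solution of `x' = a - k x` with `x 0 = x₀`. -/
noncomputable def linearRelaxation (x₀ a k t : ℝ) : ℝ :=
  (x₀ - a / k) * exp (-k * t) + a / k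

@[simp]
lemma linearRelaxation_zero (x₀ a k : ℝ) : linearRelaxation x₀ a k 0 = x₀ := by
  simp [linearRelaxation]

lemma hasDerivAt_linearRelaxation (x₀ a : ℝ) {k : ℝ} (hk : k ≠ 0) (t : ℝ) :
    HasDerivAt (linearRelaxation x₀ a k) (a - k * linearRelaxation x₀ a k t) t := by
  have hexp : HasDerivAt (fun s => exp (-k * s)) (exp (-k * t) * -k) t := by
    simpa using ((hasDerivAt_id t).const_mul (-k)).exp
  refine ((hexp.const_mul (x₀ - a / k)).add_const (a / k)).congr_deriv ?_
  unfold linearRelaxation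
  field_simp
  ring

lemma linearRelaxation_const_mul (c x₀ a k t : ℝ) :
    linearRelaxation (c * x₀) (c * a) k t = c * linearRelaxation x₀ a k t := by
  simp only [linearRelaxation]
  ring

lemma eq_mul_sq_of_sqrt_div_sqrt_eq {a b c : ℝ} (ha : 0 ≤ a) (hb : 0 < b)
    (h : √a / √b = c) : a = b * c ^ 2 := by
  rw [← h, div_pow, sq_sqrt ha, sq_sqrt hb.le]
  field_simp

theorem example21_DR_solution_general
    (κ₁ κ₂ κ₃ κ₄ κ₅ κ₆ x₀ y₀ : ℝ)
    (h1 : 0 < κ₁) (h2 : 0 < κ₂) (h3 : 0 < κ₃) (h4 : 0 < κ₄)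
    (hx₀ : 0 < x₀)
    (h46 : κ₄ = κ₆)
    (hratio1 : Real.sqrt κ₁ / Real.sqrt κ₂ = κ₅ / κ₃)
    (hratio2 : κ₅ / κ₃ = y₀ / x₀) :
    let x : ℝ → ℝ := fun t => (x₀ - κ₃ / κ₄) * Real.exp (-κ₄ * t) + κ₃ / κ₄
    let y : ℝ → ℝ := fun t => (y₀ - κ₅ / κ₆) * Real.exp (-κ₆ * t) + κ₅ / κ₆
    x 0 = x₀ ∧ y 0 = y₀ ∧
    ∀ t ≥ (0:ℝ),
      HasDerivWithinAt x
        (-2 * κ₁ * (x t) ^ 2 + 2 * κ₂ * (y t) ^ 2 + κ₃ - κ₄ * x t) (Set.Ici 0) t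
      ∧ HasDerivWithinAt y
          (2 * κ₁ * (x t) ^ 2 - 2 * κ₂ * (y t) ^ 2 + κ₅ - κ₆ * y t) (Set.Ici 0) t
      ∧ κ₁ * (x t) ^ 2 = κ₂ * (y t) ^ 2 := by
  intro x y
  have hx : x = linearRelaxation x₀ κ₃ κ₄ := rfl
  have hy : y = linearRelaxation y₀ κ₅ κ₆ := rfl
  clear_value x y
  subst hx hy h46
  set c := κ₅ / κ₃
  have hκ₁ : κ₁ = κ₂ * c ^ 2 := eq_mul_sq_of_sqrt_div_sqrt_eq h1.le h2 hratio1
  have hy₀ : y₀ = c * x₀ := by rw [hratio2]; field_simp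
  have hκ₅ : κ₅ = c * κ₃ := by simp only [c]; field_simp
  have hyx (t : ℝ) : linearRelaxation y₀ κ₅ κ₄ t = c * linearRelaxation x₀ κ₃ κ₄ t := by
    rw [hy₀, hκ₅, linearRelaxation_const_mul]
  have hDR (t : ℝ) :
      κ₁ * linearRelaxation x₀ κ₃ κ₄ t ^ 2 = κ₂ * linearRelaxation y₀ κ₅ κ₄ t ^ 2 := by
    rw [hyx, hκ₁]; ring
  refine ⟨linearRelaxation_zero .., linearRelaxation_zero .., fun t _ => ⟨?_, ?_, hDR t⟩⟩
  · exact (hasDerivAt_linearRelaxation x₀ κ₃ h4.ne' t).hasDerivWithinAt.congr_deriv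
      (by linarith [hDR t])
  · exact (hasDerivAt_linearRelaxation y₀ κ₅ h4.ne' t).hasDerivWithinAt.congr_deriv
      (by linarith [hDR t])

/-- Example 2.1: for the network `2X ⇌ 2Y, ∅ ⇌ X, ∅ ⇌ Y`, if `κ₄ = κ₆` and
`√κ₁/√κ₂ = κ₅/κ₃ = y₀/x₀`, then the explicit exponential functions `x(t), y(t)` solve the
nonlinear mass-action system and satisfy the DR condition `κ₁ x(t)² = κ₂ y(t)²` for all
`t ≥ 0`. -/
theorem example21_DR_solution
    (κ₁ κ₂ κ₃ κ₄ κ₅ κ₆ x₀ y₀ : ℝ)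
    (h1 : 0 < κ₁) (h2 : 0 < κ₂) (h3 : 0 < κ₃) (h4 : 0 < κ₄) (h5 : 0 < κ₅) (h6 : 0 < κ₆)
    (hx₀ : 0 < x₀) (hy₀ : 0 < y₀)
    (h46 : κ₄ = κ₆)
    (hratio1 : Real.sqrt κ₁ / Real.sqrt κ₂ = κ₅ / κ₃)
    (hratio2 : κ₅ / κ₃ = y₀ / x₀) :
    let x : ℝ → ℝ := fun t => (x₀ - κ₃ / κ₄) * Real.exp (-κ₄ * t) + κ₃ / κ₄
    let y : ℝ → ℝ := fun t => (y₀ - κ₅ / κ₆) * Real.exp (-κ₆ * t) + κ₅ / κ₆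
    x 0 = x₀ ∧ y 0 = y₀ ∧
    ∀ t ≥ (0:ℝ),
      HasDerivWithinAt x
        (-2 * κ₁ * (x t) ^ 2 + 2 * κ₂ * (y t) ^ 2 + κ₃ - κ₄ * x t) (Set.Ici 0) t
      ∧ HasDerivWithinAt y
          (2 * κ₁ * (x t) ^ 2 - 2 * κ₂ * (y t) ^ 2 + κ₅ - κ₆ * y t) (Set.Ici 0) t
      ∧ κ₁ * (x t) ^ 2 = κ₂ * (y t) ^ 2 :=
  example21_DR_solution_general κ₁ κ₂ κ₃ κ₄ κ₅ κ₆ x₀ y₀ h1 h2 h3 h4 hx₀ h46 hratio1 hratio2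
end

section
/- Example 2.2 / Example 4.1 (no nonconstant DR solution for the network X ⇌ 2Y, ∅ ⇌ X, ∅ ⇌ Y): Let κ₁,…,κ₆ > 0. Suppose x, y : [0,∞) → ℝ are differentiable, satisfy the mass-action system x'(t) = −κ₁x(t) + κ₂y(t)² + κ₃ − κ₄x(t), y'(t) = 2κ₁x(t) − 2κ₂y(t)² + κ₅ − κ₆y(t), and satisfy the DR condition κ₁ x(t) = κ₂ y(t)² for all t ≥ 0. Then x and y are constant; in fact x(t) = κ₃/κ₄ and y(t) = κ₅/κ₆ for all t ≥ 0. -/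
/-- Example 2.2 / 4.1: for the network `X ⇌ 2Y, ∅ ⇌ X, ∅ ⇌ Y` with positive rate constants,
any differentiable solution of the mass-action system satisfying the DR condition
`κ₁ x(t) = κ₂ y(t)²` on `[0,∞)` is constant, with `x(t) = κ₃/κ₄` and `y(t) = κ₅/κ₆`. -/
theorem example22_no_nonconstant_DR_solution
    (κ₁ κ₂ κ₃ κ₄ κ₅ κ₆ : ℝ)
    (h1 : 0 < κ₁) (h2 : 0 < κ₂) (h3 : 0 < κ₃) (h4 : 0 < κ₄) (h5 : 0 < κ₅) (h6 : 0 < κ₆)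
    (x y : ℝ → ℝ)
    (hx : ∀ t ≥ (0:ℝ), HasDerivWithinAt x
      (-κ₁ * x t + κ₂ * (y t) ^ 2 + κ₃ - κ₄ * x t) (Set.Ici 0) t)
    (hy : ∀ t ≥ (0:ℝ), HasDerivWithinAt y
      (2 * κ₁ * x t - 2 * κ₂ * (y t) ^ 2 + κ₅ - κ₆ * y t) (Set.Ici 0) t)
    (hDR : ∀ t ≥ (0:ℝ), κ₁ * x t = κ₂ * (y t) ^ 2) :
    ∀ t ≥ (0:ℝ), x t = κ₃ / κ₄ ∧ y t = κ₅ / κ₆ := by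
  have hyc : ContinuousOn y (Set.Ici 0) := fun t ht => (hy t ht).continuousWithinAt
  set a : ℝ := (2*κ₆ - κ₄) * κ₂ with ha_def
  set b : ℝ := -(2*κ₂*κ₅) with hb_def
  set c : ℝ := κ₁*κ₃ with hc_def
  have hb : b ≠ 0 := by
    rw [hb_def]; nlinarith
  -- differentiate the DR constraint
  have key : ∀ t ≥ (0:ℝ), a * (y t)^2 + b * (y t) + c = 0 := by
    intro t ht
    have hw0 : HasDerivWithinAt (fun u => κ₁ * x u - κ₂ * (y u)^2) 0 (Set.Ici 0) t := by
      refine (hasDerivWithinAt_const t (Set.Ici 0) (0:ℝ)).congr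
        (fun u hu => ?_) ?_
      · have := hDR u hu; linarith
      · have := hDR t ht; linarith
    have hw1 : HasDerivWithinAt (fun u => κ₁ * x u - κ₂ * (y u)^2)
        (κ₁ * (-κ₁ * x t + κ₂ * (y t) ^ 2 + κ₃ - κ₄ * x t)
          - κ₂ * ((2:ℕ) * (y t) ^ (2-1) * (2 * κ₁ * x t - 2 * κ₂ * (y t) ^ 2 + κ₅ - κ₆ * y t)))
        (Set.Ici 0) t := by
      exact ((hx t ht).const_mul κ₁).sub (((hy t ht).pow 2).const_mul κ₂)
    have hE : κ₁ * (-κ₁ * x t + κ₂ * (y t) ^ 2 + κ₃ - κ₄ * x t)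
          - κ₂ * ((2:ℕ) * (y t) ^ (2-1) * (2 * κ₁ * x t - 2 * κ₂ * (y t) ^ 2 + κ₅ - κ₆ * y t))
          = 0 := by
      have u1 := hw1.derivWithin ((uniqueDiffOn_Ici 0) t ht)
      have u2 := hw0.derivWithin ((uniqueDiffOn_Ici 0) t ht)
      rw [u2] at u1; exact u1.symm
    have hD := hDR t ht
    push_cast at hE
    rw [ha_def, hb_def, hc_def]
    linear_combination hE + (κ₁ + κ₄ + 4*κ₂*(y t)) * hD
  -- y is constant
  have ycst : ∀ t ≥ (0:ℝ), y t = y 0 := by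
    intro t ht
    by_contra hne
    set m : ℝ := (y 0 + y t)/2 with hm_def
    have hm : m ∈ Set.uIcc (y 0) (y t) := by
      rcases le_total (y 0) (y t) with h | h
      · exact Set.mem_uIcc.mpr (Or.inl ⟨by rw [hm_def]; linarith, by rw [hm_def]; linarith⟩)
      · exact Set.mem_uIcc.mpr (Or.inr ⟨by rw [hm_def]; linarith, by rw [hm_def]; linarith⟩)
    have hsub : Set.uIcc 0 t ⊆ Set.Ici 0 := by
      intro u hu
      rw [Set.uIcc_of_le ht] at hu
      exact hu.1
    have him := intermediate_value_uIcc (hyc.mono hsub)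
    obtain ⟨r, hr, hry⟩ := him hm
    have h0 := key 0 le_rfl
    have hT := key t ht
    have hR := key r (hsub hr)
    rw [hry] at hR
    have hm0 : m ≠ y 0 := fun h => hne (by rw [hm_def] at h; linarith)
    have hmt : m ≠ y t := fun h => hne (by rw [hm_def] at h; linarith)
    have e1 : (a*(y 0 + m) + b) * (y 0 - m) = 0 := by linear_combination h0 - hR
    have e2 : (a*(y t + m) + b) * (y t - m) = 0 := by linear_combination hT - hR
    have f1 : a*(y 0 + m) + b = 0 := by
      rcases mul_eq_zero.mp e1 with h | h
      · exact h
      · exact absurd (by linarith : m = y 0) hm0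
    have f2 : a*(y t + m) + b = 0 := by
      rcases mul_eq_zero.mp e2 with h | h
      · exact h
      · exact absurd (by linarith : m = y t) hmt
    have ha : a = 0 := by
      rcases mul_eq_zero.mp (show a*(y 0 - y t) = 0 by linear_combination f1 - f2) with h | h
      · exact h
      · exact absurd (show y t = y 0 by linarith) hne
    apply hb
    rw [ha] at f1; linarith
  -- derivative of constant y is 0, read off y 0
  have hy0 : y 0 = κ₅ / κ₆ := by
    have hc0 : HasDerivWithinAt y 0 (Set.Ici 0) 0 := by
      refine (hasDerivWithinAt_const (0:ℝ) (Set.Ici 0) (y 0)).congr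
        (fun u hu => ycst u hu) (ycst 0 le_rfl)
    have u1 := (hy 0 le_rfl).derivWithin ((uniqueDiffOn_Ici 0) 0 Set.self_mem_Ici)
    have u2 := hc0.derivWithin ((uniqueDiffOn_Ici 0) 0 Set.self_mem_Ici)
    rw [u2] at u1
    have hD := hDR 0 le_rfl
    field_simp
    linarith
  -- x is constant (from DR and y constant)
  have xcst : ∀ t ≥ (0:ℝ), x t = x 0 := by
    intro t ht
    have h1' := hDR t ht
    have h2' := hDR 0 le_rfl
    rw [ycst t ht] at h1'
    have : κ₁ * x t = κ₁ * x 0 := by rw [h1', h2']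
    exact mul_left_cancel₀ (ne_of_gt h1) this
  have hx0 : x 0 = κ₃ / κ₄ := by
    have hc0 : HasDerivWithinAt x 0 (Set.Ici 0) 0 := by
      refine (hasDerivWithinAt_const (0:ℝ) (Set.Ici 0) (x 0)).congr
        (fun u hu => xcst u hu) (xcst 0 le_rfl)
    have u1 := (hx 0 le_rfl).derivWithin ((uniqueDiffOn_Ici 0) 0 Set.self_mem_Ici)
    have u2 := hc0.derivWithin ((uniqueDiffOn_Ici 0) 0 Set.self_mem_Ici)
    rw [u2] at u1
    have hD := hDR 0 le_rfl
    field_simp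
    linarith
  intro t ht
  exact ⟨by rw [xcst t ht, hx0], by rw [ycst t ht, hy0]⟩
end

section
/- Example 4.2 (decaying-dimerization network X ⇌ 2Y, X → Z, Y → ∅ admits a DR solution): Let κ₁, κ₂, κ₃, κ₄ > 0, x₀, y₀ > 0, z₀ ≥ 0 satisfy κ₃ = 2κ₄ and κ₁ x₀ = κ₂ y₀² (equivalently κ₁/κ₂ = y₀²/x₀). Define x(t) := x₀ e^{−κ₃ t}, y(t) := y₀ e^{−κ₄ t}, z(t) := z₀ + x₀(1 − e^{−κ₃ t}). Then x, y, z satisfy the nonlinear mass-action system x'(t) = −κ₁x(t) + κ₂y(t)² − κ₃x(t), y'(t) = 2κ₁x(t) − 2κ₂y(t)² − κ₄y(t), z'(t) = κ₃x(t) with initial values x₀, y₀, z₀, and the DR condition κ₁ x(t) = κ₂ y(t)² holds for all t ≥ 0. -/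
open Real

theorem hasDerivAt_const_mul_exp_neg_mul (a c t : ℝ) :
    HasDerivAt (fun s => a * exp (-c * s)) (-c * (a * exp (-c * t))) t := by
  have hexp : HasDerivAt (fun s => exp (-c * s)) (exp (-c * t) * -c) t := by
    simpa using ((hasDerivAt_id t).const_mul (-c)).exp
  exact (hexp.const_mul a).congr_deriv (by ring)

theorem hasDerivAt_const_add_mul_one_sub_exp_neg_mul (z₀ a c t : ℝ) :
    HasDerivAt (fun s => z₀ + a * (1 - exp (-c * s))) (c * (a * exp (-c * t))) t := by
  have h : HasDerivAt (fun s => z₀ + a - a * exp (-c * s)) (0 - -c * (a * exp (-c * t))) t :=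
    (hasDerivAt_const t (z₀ + a)).sub (hasDerivAt_const_mul_exp_neg_mul a c t)
  convert h using 1
  · funext s; ring
  · ring

theorem exp_neg_mul_sq (c t : ℝ) : exp (-c * t) ^ 2 = exp (-(2 * c) * t) := by
  rw [← exp_nat_mul]; ring_nf

theorem balance_of_exp_decay {κ₁ κ₂ c x₀ y₀ : ℝ} (hbal : κ₁ * x₀ = κ₂ * y₀ ^ 2) (t : ℝ) :
    κ₁ * (x₀ * exp (-(2 * c) * t)) = κ₂ * (y₀ * exp (-c * t)) ^ 2 := by
  rw [mul_pow, exp_neg_mul_sq, ← mul_assoc, hbal, mul_assoc]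

theorem example42_DR_solution_general
    (κ₁ κ₂ κ₃ κ₄ x₀ y₀ z₀ : ℝ)
    (hκ34 : κ₃ = 2 * κ₄)
    (hDR0 : κ₁ * x₀ = κ₂ * y₀ ^ 2) :
    let x : ℝ → ℝ := fun t => x₀ * Real.exp (-κ₃ * t)
    let y : ℝ → ℝ := fun t => y₀ * Real.exp (-κ₄ * t)
    let z : ℝ → ℝ := fun t => z₀ + x₀ * (1 - Real.exp (-κ₃ * t))
    x 0 = x₀ ∧ y 0 = y₀ ∧ z 0 = z₀ ∧
    ∀ t ≥ (0:ℝ),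
      HasDerivWithinAt x (-κ₁ * x t + κ₂ * (y t) ^ 2 - κ₃ * x t) (Set.Ici 0) t
      ∧ HasDerivWithinAt y (2 * κ₁ * x t - 2 * κ₂ * (y t) ^ 2 - κ₄ * y t) (Set.Ici 0) t
      ∧ HasDerivWithinAt z (κ₃ * x t) (Set.Ici 0) t
      ∧ κ₁ * x t = κ₂ * (y t) ^ 2 := by
  subst hκ34
  intro x y z
  refine ⟨by simp [x], by simp [y], by simp [z], fun t _ => ?_⟩
  -- Along the balance the reversible reaction contributes nothing, leaving pure linear decay.
  have hbal : κ₁ * x t = κ₂ * y t ^ 2 := balance_of_exp_decay hDR0 t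
  refine ⟨?_, ?_, ?_, hbal⟩
  · exact (hasDerivAt_const_mul_exp_neg_mul x₀ _ t).hasDerivWithinAt.congr_deriv (by linarith)
  · exact (hasDerivAt_const_mul_exp_neg_mul y₀ κ₄ t).hasDerivWithinAt.congr_deriv (by linarith)
  · exact (hasDerivAt_const_add_mul_one_sub_exp_neg_mul z₀ x₀ _ t).hasDerivWithinAt

/-- Example 4.2 (decaying-dimerization network `X ⇌ 2Y, X → Z, Y → ∅`): if `κ₃ = 2κ₄` and
`κ₁ x₀ = κ₂ y₀²`, then the explicit exponential functions `x(t), y(t), z(t)` solve the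
nonlinear mass-action system and satisfy the DR condition `κ₁ x(t) = κ₂ y(t)²` for all
`t ≥ 0`. -/
theorem example42_DR_solution
    (κ₁ κ₂ κ₃ κ₄ x₀ y₀ z₀ : ℝ)
    (h1 : 0 < κ₁) (h2 : 0 < κ₂) (h3 : 0 < κ₃) (h4 : 0 < κ₄)
    (hx₀ : 0 < x₀) (hy₀ : 0 < y₀) (hz₀ : 0 ≤ z₀)
    (hκ34 : κ₃ = 2 * κ₄)
    (hDR0 : κ₁ * x₀ = κ₂ * y₀ ^ 2) :
    let x : ℝ → ℝ := fun t => x₀ * Real.exp (-κ₃ * t)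
    let y : ℝ → ℝ := fun t => y₀ * Real.exp (-κ₄ * t)
    let z : ℝ → ℝ := fun t => z₀ + x₀ * (1 - Real.exp (-κ₃ * t))
    x 0 = x₀ ∧ y 0 = y₀ ∧ z 0 = z₀ ∧
    ∀ t ≥ (0:ℝ),
      HasDerivWithinAt x (-κ₁ * x t + κ₂ * (y t) ^ 2 - κ₃ * x t) (Set.Ici 0) t
      ∧ HasDerivWithinAt y (2 * κ₁ * x t - 2 * κ₂ * (y t) ^ 2 - κ₄ * y t) (Set.Ici 0) t
      ∧ HasDerivWithinAt z (κ₃ * x t) (Set.Ici 0) t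
      ∧ κ₁ * x t = κ₂ * (y t) ^ 2 :=
  example42_DR_solution_general κ₁ κ₂ κ₃ κ₄ x₀ y₀ z₀ hκ34 hDR0
end

section
/- Example 4.4 (no nonconstant DR solution for the network ∅ ⇌ X+Y, ∅ ⇌ X, ∅ ⇌ Y, X ⇌ Y): Let κ₁, κ₂ > 0 and κ₃, κ₄, κ₅, κ₆, κ₇, κ₈ ≥ 0. Suppose x, y : [0,∞) → ℝ_{>0} are differentiable, satisfy the mass-action system x'(t) = κ₁ − κ₂x(t)y(t) + κ₃ − κ₄x(t) − κ₇x(t) + κ₈y(t), y'(t) = κ₁ − κ₂x(t)y(t) + κ₅ − κ₆y(t) + κ₇x(t) − κ₈y(t), and satisfy the DR condition κ₁ = κ₂ x(t) y(t) for all t ≥ 0. Then x and y are constant functions. -/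
/-- Example 4.4: for the network `∅ ⇌ X+Y, ∅ ⇌ X, ∅ ⇌ Y, X ⇌ Y` with `κ₁, κ₂ > 0`, any
positive differentiable solution of the mass-action system satisfying the DR condition
`κ₁ = κ₂ x(t) y(t)` on `[0,∞)` is constant. -/
theorem example44_no_nonconstant_DR_solution
    (κ₁ κ₂ κ₃ κ₄ κ₅ κ₆ κ₇ κ₈ : ℝ)
    (h1 : 0 < κ₁) (h2 : 0 < κ₂)
    (h3 : 0 ≤ κ₃) (h4 : 0 ≤ κ₄) (h5 : 0 ≤ κ₅) (h6 : 0 ≤ κ₆) (h7 : 0 ≤ κ₇) (h8 : 0 ≤ κ₈)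
    (x y : ℝ → ℝ)
    (hxpos : ∀ t ≥ (0:ℝ), 0 < x t) (hypos : ∀ t ≥ (0:ℝ), 0 < y t)
    (hx : ∀ t ≥ (0:ℝ), HasDerivWithinAt x
      (κ₁ - κ₂ * x t * y t + κ₃ - κ₄ * x t - κ₇ * x t + κ₈ * y t) (Set.Ici 0) t)
    (hy : ∀ t ≥ (0:ℝ), HasDerivWithinAt y
      (κ₁ - κ₂ * x t * y t + κ₅ - κ₆ * y t + κ₇ * x t - κ₈ * y t) (Set.Ici 0) t)
    (hDR : ∀ t ≥ (0:ℝ), κ₁ = κ₂ * x t * y t) :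
    ∃ a b : ℝ, ∀ t ≥ (0:ℝ), x t = a ∧ y t = b := by
  -- key pointwise relation: derivative of x*y is zero
  have key : ∀ t ≥ (0:ℝ),
      (κ₃ - (κ₄ + κ₇) * x t + κ₈ * y t) * y t
        + x t * (κ₅ - (κ₆ + κ₈) * y t + κ₇ * x t) = 0 := by
    intro t ht
    have hder : HasDerivWithinAt (fun s => x s * y s)
        ((κ₁ - κ₂ * x t * y t + κ₃ - κ₄ * x t - κ₇ * x t + κ₈ * y t) * y t
          + x t * (κ₁ - κ₂ * x t * y t + κ₅ - κ₆ * y t + κ₇ * x t - κ₈ * y t))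
        (Set.Ici 0) t := (hx t ht).mul (hy t ht)
    have hconst : HasDerivWithinAt (fun s => x s * y s) 0 (Set.Ici 0) t := by
      have hc : HasDerivWithinAt (fun _ : ℝ => κ₁ / κ₂) 0 (Set.Ici 0) t :=
        hasDerivWithinAt_const _ _ _
      refine hc.congr (fun s hs => ?_) ?_
      · have := hDR s hs
        field_simp
        linarith
      · have := hDR t ht
        field_simp
        linarith
    have hU : UniqueDiffWithinAt ℝ (Set.Ici (0:ℝ)) t := uniqueDiffOn_Ici 0 t ht
    have e1 := hder.derivWithin hU
    have e2 := hconst.derivWithin hU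
    have h0 := e1.symm.trans e2
    have hd := hDR t ht
    linear_combination h0 - (y t + x t) * hd
  by_cases hxc : ∀ t ≥ (0:ℝ), x t = x 0
  · refine ⟨x 0, y 0, fun t ht => ⟨hxc t ht, ?_⟩⟩
    have h0 := hDR 0 le_rfl
    have ht' := hDR t ht
    have hx0 : x t = x 0 := hxc t ht
    have hx0pos := hxpos 0 le_rfl
    have hne : κ₂ * x 0 ≠ 0 := by positivity
    have heq : κ₂ * x 0 * y t = κ₂ * x 0 * y 0 := by
      linear_combination ht'.symm.trans h0 - κ₂ * y t * hx0
    exact mul_left_cancel₀ hne heq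
  · push_neg at hxc
    obtain ⟨t₀, ht₀, hne⟩ := hxc
    exfalso
    set P : Polynomial ℝ :=
      Polynomial.C (κ₂^2 * κ₇) * Polynomial.X ^ 4
        + Polynomial.C (κ₂^2 * κ₅) * Polynomial.X ^ 3
        + Polynomial.C (-(κ₁ * κ₂ * (κ₄ + κ₆ + κ₇ + κ₈))) * Polynomial.X ^ 2
        + Polynomial.C (κ₁ * κ₂ * κ₃) * Polynomial.X
        + Polynomial.C (κ₁^2 * κ₈) with hP
    have hroot : ∀ t ≥ (0:ℝ), P.IsRoot (x t) := by
      intro t ht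
      have hk := key t ht
      have hd := hDR t ht
      simp only [hP, Polynomial.IsRoot, Polynomial.eval_add, Polynomial.eval_mul,
        Polynomial.eval_pow, Polynomial.eval_C, Polynomial.eval_X]
      linear_combination (κ₂^2 * (x t)^2) * hk
        + (κ₂ * κ₃ * x t + κ₈ * (κ₁ + κ₂ * x t * y t)
            - κ₂ * (κ₄ + κ₆ + κ₇ + κ₈) * (x t)^2) * hd
    have hcont : ContinuousOn x (Set.Ici (0:ℝ)) :=
      fun t ht => (hx t ht).continuousWithinAt
    have himg : IsPreconnected (x '' Set.Ici (0:ℝ)) :=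
      (isPreconnected_Ici).image x hcont
    have hord := himg.ordConnected
    have hmem0 : x 0 ∈ x '' Set.Ici (0:ℝ) := ⟨0, Set.self_mem_Ici, rfl⟩
    have hmemt : x t₀ ∈ x '' Set.Ici (0:ℝ) := ⟨t₀, ht₀, rfl⟩
    have hminmem : min (x t₀) (x 0) ∈ x '' Set.Ici (0:ℝ) := by
      rcases min_choice (x t₀) (x 0) with h | h <;> rw [h] <;> assumption
    have hmaxmem : max (x t₀) (x 0) ∈ x '' Set.Ici (0:ℝ) := by
      rcases max_choice (x t₀) (x 0) with h | h <;> rw [h] <;> assumption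
    have hsub : Set.Icc (min (x t₀) (x 0)) (max (x t₀) (x 0)) ⊆ x '' Set.Ici (0:ℝ) :=
      hord.out hminmem hmaxmem
    have hsub2 : x '' Set.Ici (0:ℝ) ⊆ {r | P.IsRoot r} := by
      rintro r ⟨t, ht, rfl⟩
      exact hroot t ht
    have hlt : min (x t₀) (x 0) < max (x t₀) (x 0) := min_lt_max.mpr hne
    have hinf : Set.Infinite {r | P.IsRoot r} :=
      (Set.Icc_infinite hlt).mono (hsub.trans hsub2)
    have hP0 : P = 0 := Polynomial.eq_zero_of_infinite_isRoot P hinf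
    -- extract coefficients
    have hcoeff : ∀ n, P.coeff n = 0 := by intro n; rw [hP0]; simp
    have c3 := hcoeff 3
    have c1 := hcoeff 1
    have c0 := hcoeff 0
    have c4 := hcoeff 4
    have c2 := hcoeff 2
    simp only [hP, Polynomial.coeff_add, Polynomial.coeff_C_mul, Polynomial.coeff_X_pow,
      Polynomial.coeff_C, Polynomial.coeff_X] at c3 c1 c0 c4 c2
    norm_num at c3 c1 c0 c4 c2
    have hκ₅ : κ₅ = 0 := c3.resolve_left h2.ne'
    have hκ₃ : κ₃ = 0 := c1.resolve_left (by rintro (h | h) <;> [exact h1.ne' h; exact h2.ne' h])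
    have hκ₈ : κ₈ = 0 := c0.resolve_left h1.ne'
    have hκ₇ : κ₇ = 0 := c4.resolve_left h2.ne'
    have hsum : κ₄ + κ₆ + κ₇ + κ₈ = 0 :=
      c2.resolve_left (by rintro (h | h) <;> [exact h1.ne' h; exact h2.ne' h])
    have hκ₄ : κ₄ = 0 := by linarith
    have hκ₆ : κ₆ = 0 := by linarith
    -- now x has zero derivative on Ici 0, hence is constant: contradiction
    have hzero : ∀ t ≥ (0:ℝ), HasDerivWithinAt x 0 (Set.Ici 0) t := by
      intro t ht
      have hd := hDR t ht
      have := hx t ht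
      convert this using 1
      rw [hκ₃, hκ₄, hκ₇, hκ₈]
      linarith
    have hdiff : DifferentiableOn ℝ x (Set.Ici 0) :=
      fun t ht => (hzero t ht).differentiableWithinAt
    have hfd : ∀ t ∈ Set.Ici (0:ℝ), fderivWithin ℝ x (Set.Ici 0) t = 0 := by
      intro t ht
      have := (hzero t ht).hasFDerivWithinAt.fderivWithin (uniqueDiffOn_Ici 0 t ht)
      rw [this]
      ext
      simp
    have := (convex_Ici (0:ℝ)).is_const_of_fderivWithin_eq_zero hdiff hfd
      (Set.mem_Ici.mpr ht₀) (Set.mem_Ici.mpr le_rfl)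
    exact hne this
end
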